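/- Fix q ∈ (0,∞) and ρ ∈ ℝ, set δ = ρ/q. Let Ω ⊂ ℝ be an open interval, Ψ : Ω → (0,∞) with Ψ^{1/q} ∈ C², satisfying (Ψ^{1/q})'' + (ρ/q) Ψ^{1/q} ≤ 0 on Ω. Then for any x ∈ Ω and t ∈ ℝ with [x, x+t] ⊂ Ω (or [x+t, x] ⊂ Ω if t < 0): Ψ(x+t) ≤ Ψ(x) · J_{(log Ψ)'(x), ρ, q}(t). -/

import Mathlib

open scoped Classical

noncomputable def sdel (δ t : ℝ) : ℝ :=
  if 0 < δ then Real.sin (Real.sqrt δ * t) / Real.sqrt δ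
  else if δ = 0 then t
  else Real.sinh (Real.sqrt (-δ) * t) / Real.sqrt (-δ)

noncomputable def cdel (δ t : ℝ) : ℝ :=
  if 0 < δ then Real.cos (Real.sqrt δ * t)
  else if δ = 0 then 1
  else Real.cosh (Real.sqrt (-δ) * t)

/-- Truncation `f₊` of `f` between its first nonpositive and first positive roots. -/
noncomputable def truncPos (f : ℝ → ℝ) (t : ℝ) : ℝ :=
  if ∃ s ∈ Set.Ioo (min t 0) (max t 0), f s = 0 then 0 else f t

/-- The model Jacobian `J_{H,ρ,m}` for `m ∈ (0,∞)`. -/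
noncomputable def Jfun (H ρ m : ℝ) (t : ℝ) : ℝ :=
  (truncPos (fun s => cdel (ρ / m) s + (H / m) * sdel (ρ / m) s) t) ^ m

/-! With `u = Ψ^{1/q}`, `c = u'(x)/u(x)` and `h = c_δ + c s_δ` (so `h'' + δ h = 0`,
`h(0) = 1`, `h'(0) = c`), the Wronskian `u'(x+·) h - u(x+·) h'` vanishes at `0` and has
derivative `(u'' + δ u)(x+·) h ≤ 0` wherever `h ≥ 0`. Hence `u(x+·)/h` decreases while `h > 0`,
which forces `u(x+s) ≤ u(x) h(s)`; so `h` cannot reach `0` on the segment before the positive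
`u(x+·)` does, the truncation in `J` is inactive, and raising to the power `q`, with
`(log Ψ)' = q u'/u`, gives the claim. Negative `t` is reduced to positive `t` by reflection. -/

open Set Real Topology

section Formulas

variable {δ : ℝ}

lemma sdel_of_pos (hδ : 0 < δ) (t : ℝ) : sdel δ t = sin (√δ * t) / √δ := if_pos hδ

lemma cdel_of_pos (hδ : 0 < δ) (t : ℝ) : cdel δ t = cos (√δ * t) := if_pos hδ

lemma sdel_of_neg (hδ : δ < 0) (t : ℝ) : sdel δ t = sinh (√(-δ) * t) / √(-δ) :=
  (if_neg hδ.not_gt).trans (if_neg hδ.ne)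

lemma cdel_of_neg (hδ : δ < 0) (t : ℝ) : cdel δ t = cosh (√(-δ) * t) :=
  (if_neg hδ.not_gt).trans (if_neg hδ.ne)

end Formulas

lemma sdel_zero (δ : ℝ) : sdel δ 0 = 0 := by
  unfold sdel; split_ifs <;> simp

lemma cdel_zero (δ : ℝ) : cdel δ 0 = 1 := by
  unfold cdel; split_ifs <;> simp

lemma hasDerivAt_sdel (δ t : ℝ) : HasDerivAt (sdel δ) (cdel δ t) t := by
  rcases lt_trichotomy δ 0 with hδ | rfl | hδ
  · have hr : √(-δ) ≠ 0 := (Real.sqrt_pos.2 (neg_pos.2 hδ)).ne'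
    rw [funext (sdel_of_neg hδ), cdel_of_neg hδ]
    exact ((((hasDerivAt_id' t).const_mul √(-δ)).sinh).div_const √(-δ)).congr_deriv
      (by field_simp)
  · rw [show sdel 0 = id from funext fun s => by simp [sdel]]
    simpa [cdel] using hasDerivAt_id t
  · have hr : √δ ≠ 0 := (Real.sqrt_pos.2 hδ).ne'
    rw [funext (sdel_of_pos hδ), cdel_of_pos hδ]
    exact ((((hasDerivAt_id' t).const_mul √δ).sin).div_const √δ).congr_deriv
      (by field_simp)

lemma hasDerivAt_cdel (δ t : ℝ) : HasDerivAt (cdel δ) (-δ * sdel δ t) t := by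
  rcases lt_trichotomy δ 0 with hδ | rfl | hδ
  · have hr : √(-δ) ≠ 0 := (Real.sqrt_pos.2 (neg_pos.2 hδ)).ne'
    have hsq : √(-δ) ^ 2 = -δ := Real.sq_sqrt (neg_nonneg.2 hδ.le)
    rw [funext (cdel_of_neg hδ), sdel_of_neg hδ]
    convert ((hasDerivAt_id' t).const_mul √(-δ)).cosh using 1
    field_simp
    rw [hsq, neg_mul]
  · rw [show cdel 0 = fun _ => 1 from funext fun s => by simp [cdel]]
    simpa using hasDerivAt_const t (1 : ℝ)
  · have hr : √δ ≠ 0 := (Real.sqrt_pos.2 hδ).ne'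
    have hsq : √δ ^ 2 = δ := Real.sq_sqrt hδ.le
    rw [funext (cdel_of_pos hδ), sdel_of_pos hδ]
    convert ((hasDerivAt_id' t).const_mul √δ).cos using 1
    field_simp
    rw [hsq]

lemma antitoneOn_Icc_of_hasDerivAt_nonpos {a b : ℝ} {f f' : ℝ → ℝ}
    (hf : ∀ x ∈ Icc a b, HasDerivAt f (f' x) x) (hf' : ∀ x ∈ Icc a b, f' x ≤ 0) :
    AntitoneOn f (Icc a b) :=
  antitoneOn_of_hasDerivWithinAt_nonpos (convex_Icc a b) (HasDerivAt.continuousOn hf)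
    (fun x hx => (hf x (interior_subset hx)).hasDerivWithinAt)
    (fun x hx => hf' x (interior_subset hx))

section Sturm

variable {δ T : ℝ} {g g' g'' h h' : ℝ → ℝ}

/-- The Wronskian `g' h - g h'` has derivative `(g'' + δ g) h`. -/
lemma wronskian_nonpos_of_nonneg
    (hg : ∀ s ∈ Icc 0 T, HasDerivAt g (g' s) s)
    (hg' : ∀ s ∈ Icc 0 T, HasDerivAt g' (g'' s) s) (hsuper : ∀ s ∈ Icc 0 T, g'' s + δ * g s ≤ 0)
    (hh : ∀ s ∈ Icc 0 T, HasDerivAt h (h' s) s)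
    (hh' : ∀ s ∈ Icc 0 T, HasDerivAt h' (-δ * h s) s)
    (hW0 : g' 0 * h 0 = g 0 * h' 0) (hh_nonneg : ∀ s ∈ Icc 0 T, 0 ≤ h s) :
    ∀ s ∈ Icc 0 T, g' s * h s - g s * h' s ≤ 0 := by
  have hW : ∀ s ∈ Icc 0 T,
      HasDerivAt (fun r => g' r * h r - g r * h' r) ((g'' s + δ * g s) * h s) s := fun s hs =>
    (((hg' s hs).mul (hh s hs)).sub ((hg s hs).mul (hh' s hs))).congr_deriv (by ring)
  have hanti := antitoneOn_Icc_of_hasDerivAt_nonpos hW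
    fun s hs => mul_nonpos_of_nonpos_of_nonneg (hsuper s hs) (hh_nonneg s hs)
  intro s hs
  calc g' s * h s - g s * h' s ≤ g' 0 * h 0 - g 0 * h' 0 :=
        hanti ⟨le_rfl, hs.1.trans hs.2⟩ hs hs.1
    _ = 0 := sub_eq_zero.2 hW0

lemma mul_le_mul_of_wronskian_of_pos
    (hg : ∀ s ∈ Icc 0 T, HasDerivAt g (g' s) s)
    (hg' : ∀ s ∈ Icc 0 T, HasDerivAt g' (g'' s) s) (hsuper : ∀ s ∈ Icc 0 T, g'' s + δ * g s ≤ 0)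
    (hh : ∀ s ∈ Icc 0 T, HasDerivAt h (h' s) s)
    (hh' : ∀ s ∈ Icc 0 T, HasDerivAt h' (-δ * h s) s)
    (hW0 : g' 0 * h 0 = g 0 * h' 0) (hh_pos : ∀ s ∈ Icc 0 T, 0 < h s) :
    ∀ s ∈ Icc 0 T, g s * h 0 ≤ g 0 * h s := by
  have hW := wronskian_nonpos_of_nonneg hg hg' hsuper hh hh' hW0 fun s hs => (hh_pos s hs).le
  have hanti : AntitoneOn (fun r => g r / h r) (Icc 0 T) :=
    antitoneOn_Icc_of_hasDerivAt_nonpos (fun s hs => (hg s hs).div (hh s hs) (hh_pos s hs).ne')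
      fun s hs => div_nonpos_of_nonpos_of_nonneg (hW s hs) (sq_nonneg _)
  intro s hs
  have h0 : (0 : ℝ) ∈ Icc 0 T := ⟨le_rfl, hs.1.trans hs.2⟩
  exact (div_le_div_iff₀ (hh_pos s hs) (hh_pos 0 h0)).1 (hanti h0 hs hs.1)

theorem sturm_comparison
    (hg : ∀ s ∈ Icc 0 T, HasDerivAt g (g' s) s)
    (hg' : ∀ s ∈ Icc 0 T, HasDerivAt g' (g'' s) s) (hsuper : ∀ s ∈ Icc 0 T, g'' s + δ * g s ≤ 0)
    (hh : ∀ s ∈ Icc 0 T, HasDerivAt h (h' s) s)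
    (hh' : ∀ s ∈ Icc 0 T, HasDerivAt h' (-δ * h s) s)
    (hW0 : g' 0 * h 0 = g 0 * h' 0) (hg_pos : ∀ s ∈ Icc 0 T, 0 < g s) (hh0 : 0 < h 0) :
    ∀ s ∈ Icc 0 T, 0 < h s ∧ g s * h 0 ≤ g 0 * h s := by
  have hcompare : ∀ b ∈ Icc 0 T, (∀ s ∈ Icc 0 b, 0 < h s) →
      ∀ s ∈ Icc 0 b, g s * h 0 ≤ g 0 * h s := fun b hb =>
    have hsub : Icc 0 b ⊆ Icc 0 T := Icc_subset_Icc_right hb.2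
    mul_le_mul_of_wronskian_of_pos (fun s hs => hg s (hsub hs)) (fun s hs => hg' s (hsub hs))
      (fun s hs => hsuper s (hsub hs)) (fun s hs => hh s (hsub hs))
      (fun s hs => hh' s (hsub hs)) hW0
  suffices hpos : ∀ s ∈ Icc 0 T, 0 < h s from
    fun s hs => ⟨hpos s hs, hcompare T ⟨hs.1.trans hs.2, le_rfl⟩ hpos s hs⟩
  by_contra! hzero
  -- `b` is the first point where `h` stops being positive.
  set Z := Icc 0 T ∩ h ⁻¹' Iic 0
  have hZ_bdd : BddBelow Z := ⟨0, fun s hs => hs.1.1⟩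
  have hZ_closed : IsClosed Z :=
    (HasDerivAt.continuousOn hh).preimage_isClosed_of_isClosed isClosed_Icc isClosed_Iic
  obtain ⟨hbT, hb⟩ : sInf Z ∈ Z := hZ_closed.csInf_mem hzero hZ_bdd
  set b := sInf Z
  have hb0 : b ≠ 0 := fun hb0 => (hb0 ▸ hb : h 0 ≤ 0).not_gt hh0
  have hbefore : ∀ s ∈ Ico 0 b, g s * h 0 ≤ g 0 * h s := fun s hs =>
    hcompare s ⟨hs.1, hs.2.le.trans hbT.2⟩
      (fun r hr => lt_of_not_ge fun hr' => (hr.2.trans_lt hs.2).not_ge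
        (csInf_le hZ_bdd ⟨⟨hr.1, (hr.2.trans hs.2.le).trans hbT.2⟩, hr'⟩))
      s ⟨hs.1, le_rfl⟩
  have hclosure : closure (Ico 0 b) ⊆ Icc 0 T := by
    rw [closure_Ico hb0.symm]
    exact Icc_subset_Icc_right hbT.2
  have hat_b : g b * h 0 ≤ g 0 * h b :=
    le_on_closure hbefore ((HasDerivAt.continuousOn hg).mono hclosure |>.mul continuousOn_const)
      (continuousOn_const.mul ((HasDerivAt.continuousOn hh).mono hclosure))
      (by rw [closure_Ico hb0.symm]; exact ⟨hbT.1, le_rfl⟩)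
  nlinarith [hg_pos b hbT, hg_pos 0 ⟨le_rfl, hbT.1.trans hbT.2⟩, show h b ≤ 0 from hb]

theorem sturm_comparison_uIcc
    (hg : ∀ s ∈ uIcc 0 T, HasDerivAt g (g' s) s)
    (hg' : ∀ s ∈ uIcc 0 T, HasDerivAt g' (g'' s) s)
    (hsuper : ∀ s ∈ uIcc 0 T, g'' s + δ * g s ≤ 0)
    (hh : ∀ s ∈ uIcc 0 T, HasDerivAt h (h' s) s)
    (hh' : ∀ s ∈ uIcc 0 T, HasDerivAt h' (-δ * h s) s)
    (hW0 : g' 0 * h 0 = g 0 * h' 0) (hg_pos : ∀ s ∈ uIcc 0 T, 0 < g s) (hh0 : 0 < h 0) :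
    ∀ s ∈ uIcc 0 T, 0 < h s ∧ g s * h 0 ≤ g 0 * h s := by
  rcases le_total 0 T with hT | hT
  · rw [uIcc_of_le hT] at *
    exact sturm_comparison hg hg' hsuper hh hh' hW0 hg_pos hh0
  -- for `T ≤ 0`, `s ↦ g (-s)` and `s ↦ h (-s)` satisfy the same equations on `[0, -T]`.
  have hrefl : ∀ s ∈ Icc 0 (-T), -s ∈ uIcc 0 T := fun s hs => by
    rw [uIcc_of_ge hT]; constructor <;> linarith [hs.1, hs.2]
  have := sturm_comparison (δ := δ) (T := -T) (g := fun s => g (-s)) (g' := fun s => -g' (-s))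
    (g'' := fun s => g'' (-s)) (h := fun s => h (-s)) (h' := fun s => -h' (-s))
    (fun s hs => ((hg _ (hrefl s hs)).comp s (hasDerivAt_neg s)).congr_deriv (by ring))
    (fun s hs => ((hg' _ (hrefl s hs)).comp s (hasDerivAt_neg s)).neg.congr_deriv (by ring))
    (fun s hs => hsuper _ (hrefl s hs))
    (fun s hs => ((hh _ (hrefl s hs)).comp s (hasDerivAt_neg s)).congr_deriv (by ring))
    (fun s hs => ((hh' _ (hrefl s hs)).comp s (hasDerivAt_neg s)).neg.congr_deriv (by ring))
    (by simp only [neg_zero]; linarith) (fun s hs => hg_pos _ (hrefl s hs)) (by simpa using hh0)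
  intro s hs
  rw [uIcc_of_ge hT] at hs
  simpa using this (-s) ⟨by linarith [hs.2], by linarith [hs.1]⟩

end Sturm

section Model

variable (δ c : ℝ)

lemma hasDerivAt_cdel_add_mul_sdel (t : ℝ) :
    HasDerivAt (fun s => cdel δ s + c * sdel δ s) (-δ * sdel δ t + c * cdel δ t) t :=
  (hasDerivAt_cdel δ t).add ((hasDerivAt_sdel δ t).const_mul c)

lemma hasDerivAt_neg_mul_sdel_add_mul_cdel (t : ℝ) :
    HasDerivAt (fun s => -δ * sdel δ s + c * cdel δ s) (-δ * (cdel δ t + c * sdel δ t)) t :=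
  (((hasDerivAt_sdel δ t).const_mul (-δ)).add ((hasDerivAt_cdel δ t).const_mul c)).congr_deriv
    (by ring)

end Model

lemma truncPos_of_ne_zero {f : ℝ → ℝ} {t : ℝ} (hf : ∀ s ∈ Ioo (min t 0) (max t 0), f s ≠ 0) :
    truncPos f t = f t :=
  if_neg fun ⟨s, hs, hs0⟩ => hf s hs hs0

lemma Jfun_mul_eq_rpow_of_pos {ρ q c t : ℝ} (hq : q ≠ 0)
    (hpos : ∀ s ∈ uIcc 0 t, 0 < cdel (ρ / q) s + c * sdel (ρ / q) s) :
    Jfun (q * c) ρ q t = (cdel (ρ / q) t + c * sdel (ρ / q) t) ^ q := by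
  rw [Jfun, mul_div_cancel_left₀ c hq, truncPos_of_ne_zero]
  intro s hs
  refine (hpos s ?_).ne'
  rw [uIcc, min_comm, max_comm]
  exact Ioo_subset_Icc_self hs

lemma hasDerivAt_deriv_of_contDiffOn_two {f : ℝ → ℝ} {Ω : Set ℝ} (hΩ : IsOpen Ω)
    (hf : ContDiffOn ℝ 2 f Ω) {x : ℝ} (hx : x ∈ Ω) :
    HasDerivAt f (deriv f x) x ∧ HasDerivAt (deriv f) (deriv (deriv f) x) x :=
  ⟨((hf.differentiableOn (by norm_num)).differentiableAt (hΩ.mem_nhds hx)).hasDerivAt,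
    (((hf.deriv_of_isOpen hΩ (m := 1) (by norm_num)).differentiableOn
      (by norm_num)).differentiableAt (hΩ.mem_nhds hx)).hasDerivAt⟩

lemma deriv_log_eq_mul_logDeriv_rpow_one_div {Ψ : ℝ → ℝ} {q x : ℝ} (hq : q ≠ 0)
    (hΨ : ∀ᶠ y in 𝓝 x, 0 < Ψ y) (hdiff : DifferentiableAt ℝ (fun y => Ψ y ^ (1 / q)) x) :
    deriv (fun y => log (Ψ y)) x = q * logDeriv (fun y => Ψ y ^ (1 / q)) x := by
  have hlog : (fun y => log (Ψ y)) =ᶠ[𝓝 x] fun y => q * log (Ψ y ^ (1 / q)) :=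
    hΨ.mono fun y hy => by simp only [log_rpow hy]; field_simp
  rw [hlog.deriv_eq, logDeriv_apply]
  exact ((hdiff.hasDerivAt.log (rpow_pos_of_pos hΨ.self_of_nhds _).ne').const_mul q).deriv

/-- one-dimensional curvature-dimension comparison: if `(Ψ^{1/q})'' + (ρ/q)Ψ^{1/q} ≤ 0`
on an open set `Ω ⊂ ℝ`, then along any segment contained in `Ω`,
`Ψ(x+t) ≤ Ψ(x)·J_{(log Ψ)'(x),ρ,q}(t)`. -/
theorem stmt6 (q ρ : ℝ) (hq : 0 < q) (Ω : Set ℝ) (hΩ : IsOpen Ω)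
    (Ψ : ℝ → ℝ) (hΨ : ∀ x ∈ Ω, 0 < Ψ x)
    (hC2 : ContDiffOn ℝ 2 (fun x => Ψ x ^ (1 / q)) Ω)
    (hODE : ∀ x ∈ Ω, deriv (deriv (fun y => Ψ y ^ (1 / q))) x + (ρ / q) * Ψ x ^ (1 / q) ≤ 0)
    (x t : ℝ) (hseg : Set.uIcc x (x + t) ⊆ Ω) :
    Ψ (x + t) ≤ Ψ x * Jfun (deriv (fun y => Real.log (Ψ y)) x) ρ q t := by
  set u : ℝ → ℝ := fun y => Ψ y ^ (1 / q)
  set c := logDeriv u x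
  set h : ℝ → ℝ := fun s => cdel (ρ / q) s + c * sdel (ρ / q) s
  have hxΩ : x ∈ Ω := hseg left_mem_uIcc
  have hu_pos : ∀ y ∈ Ω, 0 < u y := fun y hy => rpow_pos_of_pos (hΨ y hy) _
  have hΨ_eq : ∀ y ∈ Ω, Ψ y = u y ^ q := fun y hy => by
    simp only [u, one_div]
    exact (rpow_inv_rpow (hΨ y hy).le hq.ne').symm
  have himage : (x + ·) '' uIcc 0 t = uIcc x (x + t) := by
    rw [image_const_add_uIcc, add_zero]
  have hshift : ∀ s ∈ uIcc 0 t, x + s ∈ Ω := fun s hs =>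
    hseg (himage ▸ mem_image_of_mem _ hs)
  have hu := fun y hy => hasDerivAt_deriv_of_contDiffOn_two hΩ hC2 (x := y) hy
  have hcmp := sturm_comparison_uIcc (g := fun s => u (x + s)) (h := h)
    (fun s hs => (hu _ (hshift s hs)).1.comp_const_add x s)
    (fun s hs => (hu _ (hshift s hs)).2.comp_const_add x s)
    (fun s hs => hODE _ (hshift s hs)) (fun s _ => hasDerivAt_cdel_add_mul_sdel _ c s)
    (fun s _ => hasDerivAt_neg_mul_sdel_add_mul_cdel _ c s)
    (by simpa [h, c, logDeriv_apply, sdel_zero, cdel_zero] using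
      (mul_div_cancel₀ _ (hu_pos x hxΩ).ne').symm) (fun s hs => hu_pos _ (hshift s hs))
    (by simp [h, sdel_zero, cdel_zero])
  have hle : u (x + t) ≤ u x * h t := by
    simpa [h, sdel_zero, cdel_zero] using (hcmp t right_mem_uIcc).2
  rw [deriv_log_eq_mul_logDeriv_rpow_one_div hq.ne'
    (Filter.eventually_of_mem (hΩ.mem_nhds hxΩ) hΨ) (hu x hxΩ).1.differentiableAt,
    Jfun_mul_eq_rpow_of_pos hq.ne' fun s hs => (hcmp s hs).1]
  calc Ψ (x + t) = u (x + t) ^ q := hΨ_eq _ (hseg right_mem_uIcc)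
    _ ≤ (u x * h t) ^ q := rpow_le_rpow (hu_pos _ (hseg right_mem_uIcc)).le hle hq.le
    _ = Ψ x * h t ^ q := by
      rw [mul_rpow (hu_pos x hxΩ).le (hcmp t right_mem_uIcc).1.le, hΨ_eq x hxΩ]
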